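/- arXiv:1801.01975 — 2 statements merged into one kernel-verified Lean document; each statement's English description precedes it below -/
import Mathlib

section
/- Let G be a finite simple graph, π = {W_1,…,W_d} a vertex clique-partition of G, e_π a clique cluster-partition based on π, and G^{md} any multiple clique cluster-whiskered graph built from this data. Then every vertex of G is a shedding vertex of G^{md}; more precisely, for every vertex v ∈ W_i of G and every a ∈ A_i, and for every independent set S of the induced subgraph G^{md} \ N_{G^{md}}[v], the set S ∪ {a} is an independent set of the induced subgraph G^{md} \ v. -/
namespace Paper

variable {V : Type*}

/-- `S` is an independent vertex set of the graph `H` (equivalently, of any induced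
subgraph of `H` containing `S`): its vertices are pairwise non-adjacent. -/
def IndepOn (H : SimpleGraph V) (S : Set V) : Prop :=
  ∀ x ∈ S, ∀ y ∈ S, ¬ H.Adj x y

/-- `S` is a maximal independent vertex set of the graph `H`. -/
def MaxIndep (H : SimpleGraph V) (S : Set V) : Prop :=
  IndepOn H S ∧ ∀ T : Set V, IndepOn H T → S ⊆ T → T = S

/-- The data exhibiting `H`, restricted to the vertex set `T`, as a multiple clique
cluster-whiskered graph `G^{md}` of type `(d, r)` over the base graph `G` (the induced
subgraph of `H` on `Vg`), built from a vertex clique-partition `π = {W_1, …, W_d}`,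
a clique cluster-partition `e_π = {U_1, …, U_s}` based on `π`, and added vertex sets
`A_1, …, A_d`, `B_1, …, B_r` carrying arbitrary internal edges. -/
structure MccWhiskered (H : SimpleGraph V) (T : Set V) (d s r : ℕ) where
  hrs : r ≤ s
  /-- the vertex set of the base graph `G`; the edges of `G` are the edges of `H`
  between vertices of `Vg`, i.e. `G` is the induced subgraph of `H` on `Vg`. -/
  Vg : Set V
  /-- the vertex clique-partition `π = {W_1, …, W_d}` of `G` -/
  W : Fin d → Set V
  /-- the clique cluster-partition `e_π = {U_1, …, U_s}` based on `π` -/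
  U : Fin s → Set V
  W_ne : ∀ i, (W i).Nonempty
  W_sub : ∀ i, W i ⊆ Vg
  W_disj : ∀ i j, i ≠ j → Disjoint (W i) (W j)
  W_cover : Vg ⊆ ⋃ i, W i
  W_clique : ∀ i, ∀ x ∈ W i, ∀ y ∈ W i, x ≠ y → H.Adj x y
  U_ne : ∀ j, (U j).Nonempty
  U_sub : ∀ j, U j ⊆ Vg
  U_disj : ∀ j k, j ≠ k → Disjoint (U j) (U k)
  U_cover : Vg ⊆ ⋃ j, U j
  /-- each clique of `π` is contained in some cluster -/
  W_in_U : ∀ i, ∃ j, W i ⊆ U j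
  /-- two distinct cliques of `π` lying in a common cluster have no edge between them -/
  cluster_indep : ∀ i i', i ≠ i' → ∀ j, W i ⊆ U j → W i' ⊆ U j →
    ∀ x ∈ W i, ∀ y ∈ W i', ¬ H.Adj x y
  /-- the first `r` clusters are unions of at least two cliques of `π` -/
  U_multi : ∀ j : Fin r, ∃ i i' : Fin d, i ≠ i' ∧
    W i ⊆ U (Fin.castLE hrs j) ∧ W i' ⊆ U (Fin.castLE hrs j)
  /-- the remaining `s - r` clusters each coincide with a single clique of `π` -/
  U_single : ∀ j : Fin s, r ≤ (j : ℕ) → ∃ i, U j = W i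
  /-- the added whisker sets `A_1, …, A_d` -/
  A : Fin d → Set V
  /-- the added whisker sets `B_1, …, B_r` -/
  B : Fin r → Set V
  A_ne : ∀ i, (A i).Nonempty
  B_ne : ∀ j, (B j).Nonempty
  A_disj_Vg : ∀ i, Disjoint (A i) Vg
  B_disj_Vg : ∀ j, Disjoint (B j) Vg
  A_disj : ∀ i i', i ≠ i' → Disjoint (A i) (A i')
  B_disj : ∀ j j', j ≠ j' → Disjoint (B j) (B j')
  AB_disj : ∀ i j, Disjoint (A i) (B j)
  /-- the vertex set of `G^{md}` -/
  total : T = Vg ∪ (⋃ i, A i) ∪ (⋃ j, B j)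
  /-- each vertex of `A i` is adjacent to every vertex of `W i` -/
  A_adj : ∀ i, ∀ a ∈ A i, ∀ w ∈ W i, H.Adj a w
  /-- each vertex of `B j` is adjacent to every vertex of `U j` -/
  B_adj : ∀ j, ∀ b ∈ B j, ∀ u ∈ U (Fin.castLE hrs j), H.Adj b u
  /-- besides the edges of `G`, the whisker edges, and edges inside the sets
  `A i` and `B j`, there are no other edges in `G^{md}` -/
  no_other_edges : ∀ x ∈ T, ∀ y ∈ T, H.Adj x y →
    (x ∈ Vg ∧ y ∈ Vg) ∨
    (∃ i, (x ∈ A i ∧ y ∈ W i) ∨ (y ∈ A i ∧ x ∈ W i) ∨ (x ∈ A i ∧ y ∈ A i)) ∨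
    (∃ j, (x ∈ B j ∧ y ∈ U (Fin.castLE hrs j)) ∨
          (y ∈ B j ∧ x ∈ U (Fin.castLE hrs j)) ∨ (x ∈ B j ∧ y ∈ B j))

/-- The usual criterion for `v` to be a shedding vertex: some `a ≠ v` has `N(a) ⊆ N[v]`. -/
theorem IndepOn.union_singleton_of_neighbor_le {H : SimpleGraph V} {v a : V} {S : Set V}
    (hav : a ≠ v) (hN : ∀ x, H.Adj x a → x = v ∨ H.Adj v x)
    (hS : S ⊆ {y | y ≠ v ∧ ¬ H.Adj v y}) (hSind : IndepOn H S) :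
    (∀ x ∈ S ∪ {a}, x ≠ v) ∧ IndepOn H (S ∪ {a}) := by
  have hSa : ∀ x ∈ S, ¬ H.Adj x a := fun x hx hxa =>
    (hN x hxa).elim (hS hx).1 (hS hx).2
  constructor
  · rintro x (hx | rfl)
    exacts [(hS hx).1, hav]
  · rintro x (hx | rfl) y (hy | rfl)
    · exact hSind x hx y hy
    · exact hSa x hx
    · exact fun h => hSa y hy h.symm
    · exact H.irrefl

namespace MccWhiskered

variable {H : SimpleGraph V} {T : Set V} {d s r : ℕ} (M : MccWhiskered H T d s r)

theorem notMem_Vg_of_mem_A {i : Fin d} {a : V} (ha : a ∈ M.A i) : a ∉ M.Vg :=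
  Set.disjoint_left.mp (M.A_disj_Vg i) ha

theorem eq_of_mem_A {i i' : Fin d} {a : V} (ha : a ∈ M.A i) (ha' : a ∈ M.A i') : i' = i := by
  by_contra hne
  exact Set.disjoint_left.mp (M.A_disj i' i hne) ha' ha

theorem mem_W_or_mem_A_of_adj {i : Fin d} {a x : V} (ha : a ∈ M.A i) (haT : a ∈ T)
    (hxT : x ∈ T) (hxa : H.Adj x a) : x ∈ M.W i ∨ x ∈ M.A i := by
  have haB : ∀ j, a ∉ M.B j := fun j => Set.disjoint_left.mp (M.AB_disj i j) ha
  have haVg := M.notMem_Vg_of_mem_A ha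
  rcases M.no_other_edges x hxT a haT hxa with
    ⟨_, h⟩ | ⟨i', ⟨_, h⟩ | ⟨h, hx⟩ | ⟨hx, h⟩⟩ | ⟨j, ⟨_, h⟩ | ⟨h, _⟩ | ⟨_, h⟩⟩
  · exact absurd h haVg
  · exact absurd (M.W_sub i' h) haVg
  · exact .inl (M.eq_of_mem_A ha h ▸ hx)
  · exact .inr (M.eq_of_mem_A ha h ▸ hx)
  · exact absurd (M.U_sub _ h) haVg
  · exact absurd h (haB j)
  · exact absurd h (haB j)

/-- `N(a) ⊆ W i ∪ A i ⊆ N[v]`. -/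
theorem adj_of_adj_whisker {i : Fin d} {v a x : V} (hv : v ∈ M.W i) (ha : a ∈ M.A i)
    (haT : a ∈ T) (hxT : x ∈ T) (hxa : H.Adj x a) : x = v ∨ H.Adj v x := by
  rcases M.mem_W_or_mem_A_of_adj ha haT hxT hxa with hx | hx
  · by_cases hxv : x = v
    exacts [.inl hxv, .inr (M.W_clique i v hv x hx (Ne.symm hxv))]
  · exact .inr (M.A_adj i x hx v hv).symm

end MccWhiskered

theorem mccWhiskered_shedding_general
    (H : SimpleGraph V) (d s r : ℕ) (M : MccWhiskered H Set.univ d s r)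
    (i : Fin d) (v : V) (hv : v ∈ M.W i) (a : V) (ha : a ∈ M.A i)
    (S : Set V) (hS : S ⊆ {y | y ≠ v ∧ ¬ H.Adj v y}) (hSind : IndepOn H S) :
    (∀ x ∈ S ∪ {a}, x ≠ v) ∧ IndepOn H (S ∪ {a}) := by
  have hav : a ≠ v := fun h => M.notMem_Vg_of_mem_A ha (h ▸ M.W_sub i hv)
  exact hSind.union_singleton_of_neighbor_le hav
    (fun x hxa => M.adj_of_adj_whisker hv ha trivial trivial hxa) hS

/-- **Theorem.** Every vertex of `G` is a shedding vertex of `G^{md}`: for every vertex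
`v ∈ W i` of `G` and every `a ∈ A i`, and for every independent set `S` of the induced
subgraph `G^{md} \ N_{G^{md}}[v]`, the set `S ∪ {a}` is an independent set of the
induced subgraph `G^{md} \ v`. -/
theorem mccWhiskered_shedding [Fintype V]
    (H : SimpleGraph V) (d s r : ℕ) (M : MccWhiskered H Set.univ d s r)
    (i : Fin d) (v : V) (hv : v ∈ M.W i) (a : V) (ha : a ∈ M.A i)
    (S : Set V) (hS : S ⊆ {y | y ≠ v ∧ ¬ H.Adj v y}) (hSind : IndepOn H S) :
    (∀ x ∈ S ∪ {a}, x ≠ v) ∧ IndepOn H (S ∪ {a}) :=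
  mccWhiskered_shedding_general H d s r M i v hv a ha S hS hSind

end Paper
end

section
/- Let G be a finite simple graph with vertex clique-partition π = {W_1,…,W_d}, let G^π be the clique-whiskered graph with added vertex set W, and order the maximal independent vertex sets of G^π by F_1 ≤ F_2 ⇔ F_1 \ W ⊆ F_2 \ W. Let F be a maximal element of this poset and set r = |F \ W|. Then there are exactly r! maximal chains from W to F in this poset; that is, exactly r! sequences F_0 = W, F_1, …, F_r = F of maximal independent sets of G^π such that for each k, F_k \ W ⊆ F_{k+1} \ W and |（F_{k+1} \ W) \ (F_k \ W)| = 1. -/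
/-!
Deleting the whisker vertices `W` is injective on maximal independent sets of `G^π`, since
`s_i'` lies in such a set exactly when the set misses the clique `W_i`; and every independent set
`A` of `G` is the base part of one, namely `A` plus the whiskers of the cliques that `A` misses.
So the maximal chains from `W` to `F` correspond to the saturated chains `∅ ⊂ ⋯ ⊂ F \ W` of
sets, i.e. to the `r!` orderings of `F \ W`.
-/

namespace Paper

variable {V : Type*}

/-- The data exhibiting the graph `H` (on its full vertex type) as the
clique-whiskered graph `G^π` over the base graph `G` (the induced subgraph of `H` on
`Vg`), built from a vertex clique-partition `π = {W_1, …, W_d}` of `G` by adding `d`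
new vertices `s_1', …, s_d'`, where `s_i'` is adjacent exactly to the vertices of
`W i`.  The set of added vertices is `W = Set.range sV`. -/
structure CliqueWhiskered (H : SimpleGraph V) (d : ℕ) where
  /-- the vertex set of the base graph `G`; the edges of `G` are the edges of `H`
  between vertices of `Vg`, i.e. `G` is the induced subgraph of `H` on `Vg`. -/
  Vg : Set V
  /-- the vertex clique-partition `π = {W_1, …, W_d}` of `G` -/
  W : Fin d → Set V
  /-- the added whisker vertices `s_1', …, s_d'` -/
  sV : Fin d → V
  W_ne : ∀ i, (W i).Nonempty
  W_sub : ∀ i, W i ⊆ Vg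
  W_disj : ∀ i j, i ≠ j → Disjoint (W i) (W j)
  W_cover : Vg ⊆ ⋃ i, W i
  W_clique : ∀ i, ∀ x ∈ W i, ∀ y ∈ W i, x ≠ y → H.Adj x y
  s_notin : ∀ i, sV i ∉ Vg
  s_inj : Function.Injective sV
  /-- the vertex set of `G^π` is `V(G)` together with the new vertices -/
  total : Set.univ = Vg ∪ Set.range sV
  /-- `s_i'` is adjacent exactly to the vertices of `W i` -/
  s_adj : ∀ i, ∀ w : V, H.Adj (sV i) w ↔ w ∈ W i

open Nat

theorem IndepOn.mono {H : SimpleGraph V} {S T : Set V} (hT : IndepOn H T) (hST : S ⊆ T) :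
    IndepOn H S :=
  fun x hx y hy => hT x (hST hx) y (hST hy)

theorem maxIndep_iff {H : SimpleGraph V} {S : Set V} :
    MaxIndep H S ↔ IndepOn H S ∧ ∀ x ∉ S, ∃ y ∈ S, H.Adj x y := by
  refine ⟨fun hS => ⟨hS.1, fun x hx => ?_⟩, fun ⟨hS, hdom⟩ => ⟨hS, fun T hT hST => ?_⟩⟩
  · by_contra! hnadj
    have hins : IndepOn H (insert x S) := by
      rintro a (rfl | ha) b (rfl | hb) hab
      · exact H.irrefl hab
      · exact hnadj b hb hab
      · exact hnadj a ha hab.symm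
      · exact hS.1 a ha b hb hab
    exact hx (hS.2 _ hins (Set.subset_insert x S) ▸ Set.mem_insert x S)
  · refine Set.Subset.antisymm (fun x hxT => ?_) hST
    by_contra hxS
    obtain ⟨y, hyS, hxy⟩ := hdom x hxS
    exact hT x hxT y (hST hyS) hxy

namespace CliqueWhiskered

variable {H : SimpleGraph V} {d : ℕ} (M : CliqueWhiskered H d)

theorem mem_Vg_or_mem_range (x : V) : x ∈ M.Vg ∨ x ∈ Set.range M.sV :=
  show x ∈ M.Vg ∪ Set.range M.sV from M.total ▸ Set.mem_univ x

theorem diff_range_subset_Vg (S : Set V) : S \ Set.range M.sV ⊆ M.Vg :=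
  fun x hx => (M.mem_Vg_or_mem_range x).resolve_right hx.2

theorem notMem_range_of_mem_Vg {x : V} (hx : x ∈ M.Vg) : x ∉ Set.range M.sV := by
  rintro ⟨i, rfl⟩
  exact M.s_notin i hx

theorem subset_of_diff_range_eq {S S' : Set V} (hS : IndepOn H S) (hS' : MaxIndep H S')
    (h : S \ Set.range M.sV = S' \ Set.range M.sV) : S ⊆ S' := by
  intro x hxS
  by_contra hxS'
  rcases M.mem_Vg_or_mem_range x with hx | ⟨i, rfl⟩
  · have hx' : x ∈ S' \ Set.range M.sV := h ▸ ⟨hxS, M.notMem_range_of_mem_Vg hx⟩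
    exact hxS' hx'.1
  · obtain ⟨y, hyS', hy⟩ := (maxIndep_iff.mp hS').2 _ hxS'
    have hyVg : y ∈ M.Vg := M.W_sub i ((M.s_adj i y).mp hy)
    have hy' : y ∈ S \ Set.range M.sV := h.symm ▸ ⟨hyS', M.notMem_range_of_mem_Vg hyVg⟩
    exact hS _ hxS y hy'.1 hy

theorem eq_of_diff_range_eq {S S' : Set V} (hS : MaxIndep H S) (hS' : MaxIndep H S')
    (h : S \ Set.range M.sV = S' \ Set.range M.sV) : S = S' :=
  (M.subset_of_diff_range_eq hS.1 hS' h).antisymm (M.subset_of_diff_range_eq hS'.1 hS h.symm)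

def extend (A : Set V) : Set V :=
  A ∪ M.sV '' {i | ∀ a ∈ A, a ∉ M.W i}

theorem extend_diff_range {A : Set V} (hA : A ⊆ M.Vg) : M.extend A \ Set.range M.sV = A := by
  refine Set.Subset.antisymm ?_ fun x hx => ⟨Or.inl hx, M.notMem_range_of_mem_Vg (hA hx)⟩
  rintro x ⟨hx | ⟨i, -, rfl⟩, hxr⟩
  · exact hx
  · exact absurd ⟨i, rfl⟩ hxr

theorem extend_empty : M.extend ∅ = Set.range M.sV := by
  simp [extend]

theorem maxIndep_extend {A : Set V} (hI : IndepOn H A) :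
    MaxIndep H (M.extend A) := by
  refine maxIndep_iff.mpr ⟨?_, fun x hx => ?_⟩
  · rintro x (hx | ⟨i, hi, rfl⟩) y (hy | ⟨j, hj, rfl⟩) hxy
    · exact hI x hx y hy hxy
    · exact hj x hx ((M.s_adj j x).mp hxy.symm)
    · exact hi y hy ((M.s_adj i y).mp hxy)
    · exact M.s_notin j (M.W_sub i ((M.s_adj i _).mp hxy))
  rcases M.mem_Vg_or_mem_range x with hxVg | ⟨i, rfl⟩
  · obtain ⟨i, hxW⟩ := Set.mem_iUnion.mp (M.W_cover hxVg)
    by_cases hAi : ∀ a ∈ A, a ∉ M.W i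
    · exact ⟨M.sV i, Or.inr ⟨i, hAi, rfl⟩, ((M.s_adj i x).mpr hxW).symm⟩
    · push Not at hAi
      obtain ⟨a, haA, haW⟩ := hAi
      have hxa : x ≠ a := fun h => hx (Or.inl (h ▸ haA))
      exact ⟨a, Or.inl haA, M.W_clique i x hxW a haW hxa⟩
  · have hAi : ∃ a ∈ A, a ∈ M.W i := by
      by_contra! hAi
      exact hx (Or.inr ⟨i, hAi, rfl⟩)
    obtain ⟨a, haA, haW⟩ := hAi
    exact ⟨a, Or.inl haA, (M.s_adj i a).mpr haW⟩

end CliqueWhiskered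

section SaturatedChain

variable {α : Type*} {r : ℕ}

def IsSaturatedChain (g : Fin (r + 1) → Set α) : Prop :=
  ∀ k : Fin r, g k.castSucc ⊆ g k.succ ∧ (g k.succ \ g k.castSucc).ncard = 1

def initialSegments (f : Fin r → α) (k : Fin (r + 1)) : Set α :=
  f '' {j | j.castSucc < k}

theorem IsSaturatedChain.monotone {g : Fin (r + 1) → Set α} (hg : IsSaturatedChain g) :
    Monotone g :=
  Fin.monotone_iff_le_succ.mpr fun k => (hg k).1

variable {f : Fin r → α}

theorem initialSegments_zero : initialSegments f 0 = ∅ := by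
  simp [initialSegments]

theorem initialSegments_last : initialSegments f (Fin.last r) = Set.range f := by
  simp [initialSegments]

theorem initialSegments_succ (k : Fin r) :
    initialSegments f k.succ = insert (f k) (initialSegments f k.castSucc) := by
  have hidx : {j : Fin r | j.castSucc < k.succ} = insert k {j | j.castSucc < k.castSucc} := by
    ext j
    simp [le_iff_eq_or_lt]
  rw [initialSegments, hidx, Set.image_insert_eq, initialSegments]

theorem initialSegments_succ_diff (hf : Function.Injective f) (k : Fin r) :
    initialSegments f k.succ \ initialSegments f k.castSucc = {f k} := by
  have hk : f k ∉ initialSegments f k.castSucc := by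
    rintro ⟨j, hj, hjk⟩
    exact (Fin.castSucc_lt_castSucc_iff.mp hj).ne (hf hjk)
  rw [initialSegments_succ, Set.insert_sdiff_eq_singleton hk]

theorem isSaturatedChain_initialSegments (hf : Function.Injective f) :
    IsSaturatedChain (initialSegments f) := fun k =>
  ⟨initialSegments_succ k ▸ Set.subset_insert _ _,
    by rw [initialSegments_succ_diff hf, Set.ncard_singleton]⟩

theorem IsSaturatedChain.exists_injective_eq_initialSegments {g : Fin (r + 1) → Set α}
    (hg : IsSaturatedChain g) (h0 : g 0 = ∅) :
    ∃ f : Fin r → α, Function.Injective f ∧ initialSegments f = g := by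
  choose x hx using fun k => Set.ncard_eq_one.mp (hg k).2
  have hsucc (k : Fin r) : g k.succ = insert (x k) (g k.castSucc) := by
    rw [← Set.union_singleton, ← hx k, Set.union_sdiff_cancel (hg k).1]
  have hxg : initialSegments x = g := by
    funext k
    induction k using Fin.induction with
    | zero => rw [initialSegments_zero, h0]
    | succ k ih => rw [initialSegments_succ, hsucc, ih]
  refine ⟨x, Function.Injective.of_lt_imp_ne fun j k hjk hx_eq => ?_, hxg⟩
  have hnew : x k ∉ g k.castSucc := ((hx k).symm ▸ Set.mem_singleton (x k) :
    x k ∈ g k.succ \ g k.castSucc).2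
  exact hnew (hxg ▸ ⟨j, Fin.castSucc_lt_castSucc_iff.mpr hjk, hx_eq⟩)

theorem ncard_setOf_injective_range_eq {A : Set α} (hA : A.Finite) (hr : A.ncard = r) :
    {f : Fin r → α | Function.Injective f ∧ Set.range f = A}.ncard = r ! := by
  have : Fintype A := hA.fintype
  have hbij : Set.BijOn (fun (e : Fin r ↪ A) j => (e j : α)) Set.univ
      {f : Fin r → α | Function.Injective f ∧ Set.range f = A} := by
    refine ⟨fun e _ => ⟨Subtype.val_injective.comp e.injective, ?_⟩, ?_, ?_⟩
    · show Set.range (Subtype.val ∘ e) = A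
      refine Set.eq_of_subset_of_ncard_le (Set.range_subset_iff.mpr fun j => (e j).2) ?_ hA
      rw [Set.ncard_range_of_injective (Subtype.val_injective.comp e.injective), Nat.card_fin,
        hr]
    · exact fun e _ e' _ he => DFunLike.ext _ _ fun j => Subtype.ext (congrFun he j)
    · rintro f ⟨hf, rfl⟩
      exact ⟨⟨Set.rangeFactorization f, Set.rangeFactorization_injective.mpr hf⟩,
        Set.mem_univ _, rfl⟩
  rw [← hbij.ncard_eq, Set.ncard_univ, Nat.card_eq_fintype_card, Fintype.card_embedding_eq,
    Fintype.card_fin, ← Nat.card_eq_fintype_card, Nat.card_coe_set_eq, hr, Nat.descFactorial_self]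

theorem ncard_saturatedChains {A : Set α} (hA : A.Finite) (hr : A.ncard = r) :
    {g : Fin (r + 1) → Set α | g 0 = ∅ ∧ g (Fin.last r) = A ∧ IsSaturatedChain g}.ncard =
      r ! := by
  have hbij : Set.BijOn initialSegments
      {f : Fin r → α | Function.Injective f ∧ Set.range f = A}
      {g : Fin (r + 1) → Set α | g 0 = ∅ ∧ g (Fin.last r) = A ∧ IsSaturatedChain g} := by
    refine ⟨?_, ?_, ?_⟩
    · rintro f ⟨hf, hfA⟩
      exact ⟨initialSegments_zero, initialSegments_last.trans hfA,
        isSaturatedChain_initialSegments hf⟩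
    · rintro f ⟨hf, -⟩ f' ⟨hf', -⟩ hff'
      funext k
      have hk := initialSegments_succ_diff hf k
      rwa [hff', initialSegments_succ_diff hf', Set.singleton_eq_singleton_iff, eq_comm] at hk
    · rintro g ⟨h0, hA, hg⟩
      obtain ⟨f, hf, rfl⟩ := hg.exists_injective_eq_initialSegments h0
      exact ⟨f, ⟨hf, initialSegments_last.symm.trans hA⟩, rfl⟩
  rw [← hbij.ncard_eq, ncard_setOf_injective_range_eq hA hr]

end SaturatedChain

namespace CliqueWhiskered

variable {H : SimpleGraph V} {d : ℕ} (M : CliqueWhiskered H d)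

theorem bijOn_diff_range_chains {F : Set V} (hF : MaxIndep H F) (r : ℕ) :
    Set.BijOn (fun c k => c k \ Set.range M.sV)
      {c : Fin (r + 1) → Set V | c 0 = Set.range M.sV ∧ c (Fin.last r) = F ∧
        (∀ k, MaxIndep H (c k)) ∧ IsSaturatedChain fun k => c k \ Set.range M.sV}
      {g | g 0 = ∅ ∧ g (Fin.last r) = F \ Set.range M.sV ∧ IsSaturatedChain g} := by
  refine ⟨?_, ?_, ?_⟩
  · rintro c ⟨h0, hlast, -, hc⟩
    exact ⟨by simp only [h0, Set.sdiff_self], by simp only [hlast], hc⟩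
  · rintro c ⟨-, -, hc, -⟩ c' ⟨-, -, hc', -⟩ hcc'
    funext k
    exact M.eq_of_diff_range_eq (hc k) (hc' k) (congrFun hcc' k)
  · rintro g ⟨h0, hlast, hg⟩
    have hgF (k : Fin (r + 1)) : g k ⊆ F \ Set.range M.sV := hlast ▸ hg.monotone (Fin.le_last k)
    have hgVg (k : Fin (r + 1)) : g k ⊆ M.Vg := (hgF k).trans (M.diff_range_subset_Vg F)
    have hmax (k : Fin (r + 1)) : MaxIndep H (M.extend (g k)) :=
      M.maxIndep_extend (hF.1.mono ((hgF k).trans Set.sdiff_subset))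
    have hdiff : (fun k => M.extend (g k) \ Set.range M.sV) = g :=
      funext fun k => M.extend_diff_range (hgVg k)
    refine ⟨fun k => M.extend (g k), ⟨?_, ?_, hmax, by rwa [hdiff]⟩, hdiff⟩
    · simp only [h0, extend_empty]
    · exact M.eq_of_diff_range_eq (hmax _) hF (congrFun hdiff _ ▸ hlast)

end CliqueWhiskered

theorem cliqueWhiskered_maximal_chains_card_general [Fintype V]
    (H : SimpleGraph V) (d : ℕ) (M : CliqueWhiskered H d)
    (F : Set V) (hF : MaxIndep H F)
    (r : ℕ) (hr : (F \ Set.range M.sV).ncard = r) :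
    {c : Fin (r + 1) → Set V |
      c 0 = Set.range M.sV ∧ c (Fin.last r) = F ∧
      (∀ k, MaxIndep H (c k)) ∧
      (∀ k : Fin r,
        c k.castSucc \ Set.range M.sV ⊆ c k.succ \ Set.range M.sV ∧
        ((c k.succ \ Set.range M.sV) \
          (c k.castSucc \ Set.range M.sV)).ncard = 1)}.ncard = Nat.factorial r :=
  (M.bijOn_diff_range_chains hF r).ncard_eq.trans (ncard_saturatedChains (Set.toFinite _) hr)

/-- **Theorem.** Let `F` be a maximal element of the poset of maximal independent
vertex sets of `G^π` (ordered by `F₁ ≤ F₂ ⇔ F₁ \ W ⊆ F₂ \ W`) and let `r = |F \ W|`.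
Then there are exactly `r!` maximal chains from `W` to `F` in this poset, i.e. exactly
`r!` sequences `F_0 = W, F_1, …, F_r = F` of maximal independent sets of `G^π` such
that for each `k`, `F_k \ W ⊆ F_{k+1} \ W` and `|(F_{k+1} \ W) \ (F_k \ W)| = 1`. -/
theorem cliqueWhiskered_maximal_chains_card [Fintype V]
    (H : SimpleGraph V) (d : ℕ) (M : CliqueWhiskered H d)
    (F : Set V) (hF : MaxIndep H F)
    (hFmax : ∀ F' : Set V, MaxIndep H F' →
      F \ Set.range M.sV ⊆ F' \ Set.range M.sV →
      F' \ Set.range M.sV = F \ Set.range M.sV)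
    (r : ℕ) (hr : (F \ Set.range M.sV).ncard = r) :
    {c : Fin (r + 1) → Set V |
      c 0 = Set.range M.sV ∧ c (Fin.last r) = F ∧
      (∀ k, MaxIndep H (c k)) ∧
      (∀ k : Fin r,
        c k.castSucc \ Set.range M.sV ⊆ c k.succ \ Set.range M.sV ∧
        ((c k.succ \ Set.range M.sV) \
          (c k.castSucc \ Set.range M.sV)).ncard = 1)}.ncard = Nat.factorial r :=
  cliqueWhiskered_maximal_chains_card_general H d M F hF r hr

end Paper
end
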